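/- In the graph F, there exist non-adjacent vertices u, v, a shortest uv-path P of length 3, and an induced uv-path Q of length 4, such that Q does not dominate P. -/

import Mathlib

/-!
Take `u = x1`, `v = x4`, `P = x1x2x3x4` and `Q = x1x0x6x5x4`. Since `x1` and `x4` are distinct,
non-adjacent and have no common neighbour, `P` is shortest, and `Q` has no chords. The internal
vertex `x3` of `P` is not on `Q`, and its neighbours `x2`, `x4` are not internal vertices of `Q`.
-/

open SimpleGraph

/-- The internal vertices of a walk (support minus the two endpoints). -/
def internals {V : Type*} {G : SimpleGraph V} {u v : V} (W : G.Walk u v) : List V :=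
  W.support.tail.dropLast

/-- A `uv`-walk `W` dominates a `uv`-walk `W'` if every internal vertex of `W'`
is adjacent to some internal vertex of `W` or belongs to `W`. -/
def Dominates {V : Type*} (G : SimpleGraph V) {u v : V} (W W' : G.Walk u v) : Prop :=
  ∀ x ∈ internals W', x ∈ W.support ∨ ∃ y ∈ internals W, G.Adj x y

/-- An induced (chordless) path: a path such that any two vertices on it are
adjacent in `G` only if they are consecutive on the path. -/
def IsInducedPath {V : Type*} (G : SimpleGraph V) {u v : V} (W : G.Walk u v) : Prop :=
  W.IsPath ∧ ∀ a ∈ W.support, ∀ b ∈ W.support, G.Adj a b → W.toSubgraph.Adj a b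

/-- `G` contains a hole: an induced (chordless) cycle of length at least 5. -/
def HasHole {V : Type*} (G : SimpleGraph V) : Prop :=
  ∃ (x : V) (c : G.Walk x x), c.IsCycle ∧ 5 ≤ c.length ∧
    ∀ a ∈ c.support, ∀ b ∈ c.support, G.Adj a b → c.toSubgraph.Adj a b

/-- The house graph: 5-cycle `x0x1x2x3x4` plus the chord `x1x4`. -/
def houseGraph : SimpleGraph (Fin 5) :=
  SimpleGraph.fromEdgeSet {s(0,1), s(1,2), s(2,3), s(3,4), s(4,0), s(1,4)}

/-- The domino: 6-cycle `x0x1x2x3x4x5` plus the chord `x1x4`. -/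
def dominoGraph : SimpleGraph (Fin 6) :=
  SimpleGraph.fromEdgeSet {s(0,1), s(1,2), s(2,3), s(3,4), s(4,5), s(5,0), s(1,4)}

/-- The graph `X5`. -/
def x5Graph : SimpleGraph (Fin 6) :=
  SimpleGraph.fromEdgeSet {s(0,1), s(0,5), s(1,2), s(1,5), s(2,3), s(2,5), s(3,4), s(4,5)}

/-- The graph `F`. -/
def fGraph : SimpleGraph (Fin 7) :=
  SimpleGraph.fromEdgeSet {s(0,1), s(0,6), s(1,2), s(5,6), s(2,6), s(2,3), s(2,5), s(3,4), s(4,5)}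

namespace SimpleGraph

variable {V : Type*} {G : SimpleGraph V} {u v : V}

lemma Walk.length_eq_dist_of_length_le_three (p : G.Walk u v) (hp : p.length ≤ 3) (hne : u ≠ v)
    (hnadj : ¬ G.Adj u v) (hcommon : ∀ w, ¬ (G.Adj u w ∧ G.Adj w v)) :
    p.length = G.dist u v := by
  have hfar : 2 < G.edist u v := two_lt_edist_iff.mpr
    ⟨hne, hnadj, Set.eq_empty_of_forall_notMem fun w hw => hcommon w ⟨hw.1, hw.2.symm⟩⟩
  rw [← Reachable.coe_dist_eq_edist ⟨p⟩, Nat.ofNat_lt_cast] at hfar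
  have := dist_le p
  omega

lemma isInducedPath_iff {p : G.Walk u v} : IsInducedPath G p ↔
    p.IsPath ∧ ∀ a ∈ p.support, ∀ b ∈ p.support, G.Adj a b → s(a, b) ∈ p.edges := by
  simp only [IsInducedPath, ← Subgraph.mem_edgeSet, Walk.mem_edges_toSubgraph]

lemma not_dominates_of_mem_internals {W W' : G.Walk u v} {x : V} (hx : x ∈ internals W')
    (hxW : x ∉ W.support) (hxN : ∀ y ∈ internals W, ¬ G.Adj x y) : ¬ Dominates G W W' :=
  fun hdom => (hdom x hx).elim hxW fun ⟨y, hy, hxy⟩ => hxN y hy hxy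

end SimpleGraph

instance : DecidableRel fGraph.Adj := fun _ _ => decidable_of_iff' _ (fromEdgeSet_adj _)

def fShortPath : fGraph.Walk 1 4 :=
  .cons (v := 2) (by decide) <| .cons (v := 3) (by decide) <| .cons (by decide) .nil

def fInducedPath : fGraph.Walk 1 4 :=
  .cons (v := 0) (by decide) <| .cons (v := 6) (by decide) <| .cons (v := 5) (by decide) <|
    .cons (by decide) .nil

theorem f_m3_not_dominates_sp :
    ∃ u v : Fin 7, ¬ fGraph.Adj u v ∧
      ∃ (P Q : fGraph.Walk u v),
        P.IsPath ∧ P.length = 3 ∧ P.length = fGraph.dist u v ∧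
        IsInducedPath fGraph Q ∧ Q.length = 4 ∧
        ¬ Dominates fGraph Q P := by
  refine ⟨1, 4, by decide, fShortPath, fInducedPath, (Walk.isPath_def _).mpr (by decide), rfl,
    ?_, ?_, rfl, ?_⟩
  · exact fShortPath.length_eq_dist_of_length_le_three le_rfl (by decide) (by decide) (by decide)
  · exact isInducedPath_iff.mpr ⟨(Walk.isPath_def _).mpr (by decide), by decide⟩
  · exact not_dominates_of_mem_internals (x := 3) (by decide) (by decide) (by decide)
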